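/- Fix integers M and L with 1 ≤ M < L and positive real constants δ_idle, δ_coll, δ_succ. Then the function p ↦ Σ_{i=1}^{M} [ ((1−p)^{L−i}/((L−i) p (1−p)^{L−i−1}))·δ_idle + ((1 − (1−p)^{L−i})/((L−i) p (1−p)^{L−i−1}) − 1)·δ_coll + δ_succ ] is convex on the open interval (0,1). -/

import Mathlib

/-!
Each summand is convex on its own. With `q = 1 - p` and `n = L - i ≥ 1`, the idle
coefficient `q ^ n / (n p q ^ (n - 1))` equals `(p⁻¹ - 1) / n`, and since
`1 - q ^ n = p (1 + q + ⋯ + q ^ (n - 1))` the collision coefficient equals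
`(1 + q⁻¹ + ⋯ + q⁻¹ ^ (n - 1)) / n`. Both are nonnegative combinations of the convex
functions `p⁻¹` and `(1 - p) ^ (-j)`.
-/

open Set

theorem ConvexOn.sum {𝕜 E β ι : Type*} [Semiring 𝕜] [PartialOrder 𝕜] [AddCommMonoid E]
    [AddCommMonoid β] [PartialOrder β] [IsOrderedAddMonoid β] [SMul 𝕜 E] [DistribMulAction 𝕜 β]
    {s : Set E} (hs : Convex 𝕜 s) {t : Finset ι} {f : ι → E → β}
    (hf : ∀ i ∈ t, ConvexOn 𝕜 s (f i)) : ConvexOn 𝕜 s fun x => ∑ i ∈ t, f i x := by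
  classical
  induction t using Finset.induction_on with
  | empty => exact ⟨hs, fun _ _ _ _ _ _ _ _ _ => by simp⟩
  | insert a t ha ih =>
    simp only [Finset.sum_insert ha]
    exact (hf a (Finset.mem_insert_self a t)).add
      (ih fun i hi => hf i (Finset.mem_insert_of_mem hi))

theorem convexOn_one_sub_zpow {𝕜 : Type*} [Field 𝕜] [LinearOrder 𝕜] [IsStrictOrderedRing 𝕜]
    (m : ℤ) : ConvexOn 𝕜 (Iio 1) fun p : 𝕜 => (1 - p) ^ m := by
  let g : 𝕜 →ᵃ[𝕜] 𝕜 := AffineMap.lineMap 1 0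
  have hg : ∀ p, g p = 1 - p := fun p => by simp [g, AffineMap.lineMap_apply]; ring
  have hpre : g ⁻¹' Ioi 0 = Iio 1 := by ext p; simp [hg]
  have h := (convexOn_zpow m).comp_affineMap g
  rw [hpre] at h
  exact h.congr fun p _ => by simp only [Function.comp_apply, hg]

theorem pow_pred_mul_sum_zpow_neg {K : Type*} [DivisionRing K] {q : K} (hq : q ≠ 0) (n : ℕ) :
    q ^ (n - 1) * ∑ j ∈ Finset.range n, q ^ (-(j : ℤ)) = ∑ k ∈ Finset.range n, q ^ k := by
  rw [Finset.mul_sum, ← Finset.sum_range_reflect]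
  refine Finset.sum_congr rfl fun j hj => ?_
  have hjn : j < n := Finset.mem_range.mp hj
  rw [← zpow_natCast, ← zpow_add₀ hq, ← zpow_natCast]
  congr 1
  omega

/-- The `i`-th summand of `T_COP(M, p)`, with `n = L - i`. -/
noncomputable def expectedRoundDuration (n : ℕ) (δidle δcoll δsucc p : ℝ) : ℝ :=
  ((1 - p) ^ n / ((n : ℝ) * p * (1 - p) ^ (n - 1))) * δidle
    + ((1 - (1 - p) ^ n) / ((n : ℝ) * p * (1 - p) ^ (n - 1)) - 1) * δcoll + δsucc

theorem expectedRoundDuration_eq {n : ℕ} (hn : 1 ≤ n) (δidle δcoll δsucc : ℝ) {p : ℝ}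
    (hp : p ∈ Ioo (0 : ℝ) 1) :
    expectedRoundDuration n δidle δcoll δsucc p =
      δidle / n * p⁻¹ + δcoll / n * ∑ j ∈ Finset.range n, (1 - p) ^ (-(j : ℤ))
        + (δsucc - δcoll - δidle / n) := by
  obtain ⟨hp0, hp1⟩ := hp
  have hq : (1 : ℝ) - p ≠ 0 := by linarith
  have hn0 : (n : ℝ) ≠ 0 := by positivity
  have hidle_num : (1 - p) ^ n = (1 - p) * (1 - p) ^ (n - 1) := by
    rw [← pow_succ', Nat.sub_add_cancel hn]
  have hcoll_num : 1 - (1 - p) ^ n =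
      p * ((1 - p) ^ (n - 1) * ∑ j ∈ Finset.range n, (1 - p) ^ (-(j : ℤ))) := by
    rw [pow_pred_mul_sum_zpow_neg hq, ← mul_neg_geom_sum, sub_sub_cancel]
  unfold expectedRoundDuration
  rw [hcoll_num, hidle_num]
  field_simp
  ring

theorem expectedRoundDuration_convexOn {n : ℕ} (hn : 1 ≤ n) {δidle δcoll : ℝ}
    (hidle : 0 ≤ δidle) (hcoll : 0 ≤ δcoll) (δsucc : ℝ) :
    ConvexOn ℝ (Ioo 0 1) (expectedRoundDuration n δidle δcoll δsucc) := by
  have hinv : ConvexOn ℝ (Ioo (0 : ℝ) 1) fun p => p⁻¹ :=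
    ((convexOn_zpow (-1)).subset Ioo_subset_Ioi_self (convex_Ioo 0 1)).congr fun p _ => by simp
  have hgeom : ConvexOn ℝ (Ioo (0 : ℝ) 1) fun p => ∑ j ∈ Finset.range n, (1 - p) ^ (-(j : ℤ)) :=
    ConvexOn.sum (convex_Ioo 0 1) fun j _ =>
      (convexOn_one_sub_zpow _).subset Ioo_subset_Iio_self (convex_Ioo 0 1)
  have hsum := ((hinv.smul (by positivity : 0 ≤ δidle / n)).add
    (hgeom.smul (by positivity : 0 ≤ δcoll / n))).add
    (convexOn_const (δsucc - δcoll - δidle / n) (convex_Ioo 0 1))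
  exact hsum.congr fun p hp => (expectedRoundDuration_eq hn δidle δcoll δsucc hp).symm

theorem TCOP_exact_convex_in_p_general (M L : ℕ) (hML : M < L)
    (δidle δcoll δsucc : ℝ) (hidle : 0 < δidle) (hcoll : 0 < δcoll) :
    ConvexOn ℝ (Set.Ioo (0 : ℝ) 1)
      (fun p : ℝ => ∑ i ∈ Finset.Icc 1 M,
        (((1 - p) ^ (L - i) / (((L - i : ℕ) : ℝ) * p * (1 - p) ^ (L - i - 1))) * δidle
          + ((1 - (1 - p) ^ (L - i)) / (((L - i : ℕ) : ℝ) * p * (1 - p) ^ (L - i - 1)) - 1)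
              * δcoll
          + δsucc)) := by
  refine ConvexOn.sum (convex_Ioo 0 1) fun i hi => ?_
  have hiL : 1 ≤ L - i := by have := (Finset.mem_Icc.mp hi).2; omega
  exact expectedRoundDuration_convexOn hiL hidle.le hcoll.le δsucc

/-- For `1 ≤ M < L` and positive constants, the exact expected contention-period
duration `T_COP(M,·)` is convex in `p` on `(0,1)`. -/
theorem TCOP_exact_convex_in_p (M L : ℕ) (hM : 1 ≤ M) (hML : M < L)
    (δidle δcoll δsucc : ℝ) (hidle : 0 < δidle) (hcoll : 0 < δcoll) (hsucc : 0 < δsucc) :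
    ConvexOn ℝ (Set.Ioo (0 : ℝ) 1)
      (fun p : ℝ => ∑ i ∈ Finset.Icc 1 M,
        (((1 - p) ^ (L - i) / (((L - i : ℕ) : ℝ) * p * (1 - p) ^ (L - i - 1))) * δidle
          + ((1 - (1 - p) ^ (L - i)) / (((L - i : ℕ) : ℝ) * p * (1 - p) ^ (L - i - 1)) - 1)
              * δcoll
          + δsucc)) :=
  TCOP_exact_convex_in_p_general M L hML δidle δcoll δsucc hidle hcoll
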